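/- arXiv:1605.00405 — 2 statements merged into one kernel-verified Lean document; each statement's English description precedes it below -/
import Mathlib

section
/- Let S ⊆ ℝ^N be an open convex set, f : S → ℝ twice continuously differentiable with sup_{x ∈ S} ‖∇²f(x)‖₂ ≤ L < ∞, and 0 < α < 1/L. Then the gradient descent map g(x) = x − α∇f(x) is a C¹ diffeomorphism from S onto its image g(S). -/
/-!
The Hessian bound makes `∇f` an `L`-Lipschitz map on the convex set `S`, so `α • ∇f` is a
contraction there and `x ↦ x - α • ∇f x` is injective on `S`. Its derivative
`1 - α • ∇²f x` has `‖α • ∇²f x‖ < 1`, so it is invertible by the Neumann series; the inverse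
function theorem then makes `g` a local `C¹` diffeomorphism at every point of `S`, and
injectivity glues the local inverses into a single `C¹` inverse on the open set `g '' S`.
-/

open InnerProductSpace Set Filter Topology

theorem ContDiffOn.gradient_of_isOpen {F : Type*} [NormedAddCommGroup F] [InnerProductSpace ℝ F]
    [CompleteSpace F] {f : F → ℝ} {s : Set F} {n : WithTop ℕ∞} (hf : ContDiffOn ℝ (n + 1) f s)
    (hs : IsOpen s) : ContDiffOn ℝ n (gradient f) s :=
  (toDual ℝ F).symm.contDiff.comp_contDiffOn (hf.fderiv_of_isOpen hs le_rfl)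

theorem injOn_id_sub_of_norm_sub_le {E : Type*} [NormedAddCommGroup E] [NormedSpace ℝ E]
    {G : E → E} {S : Set E} {K : ℝ} (hK : K < 1)
    (hG : ∀ x ∈ S, ∀ y ∈ S, ‖G x - G y‖ ≤ K * ‖x - y‖) : InjOn (fun x => x - G x) S := by
  intro x hx y hy hxy
  have hsub : x - y = G x - G y := by
    simp only at hxy
    linear_combination (norm := module) hxy
  have hle : ‖x - y‖ ≤ K * ‖x - y‖ := hsub ▸ hsub ▸ hG x hx y hy
  have hzero : ‖x - y‖ = 0 := by nlinarith [norm_nonneg (x - y)]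
  exact sub_eq_zero.mp (norm_eq_zero.mp hzero)

theorem HasFDerivAt.exists_equiv_id_sub {𝕜 E : Type*} [NontriviallyNormedField 𝕜]
    [NormedAddCommGroup E] [NormedSpace 𝕜 E] [CompleteSpace E] {G : E → E} {G' : E →L[𝕜] E}
    {x : E} (hG : HasFDerivAt G G' x) (hG' : ‖G'‖ < 1) :
    ∃ e : E ≃L[𝕜] E, HasFDerivAt (fun y => y - G y) (e : E →L[𝕜] E) x :=
  ⟨.ofUnit (Units.oneSub G' hG'), (hasFDerivAt_id x).sub hG⟩

section InverseOnImage

variable {𝕂 E F : Type*} [RCLike 𝕂] [NormedAddCommGroup E] [NormedSpace 𝕂 E] [CompleteSpace E]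
  [NormedAddCommGroup F] [NormedSpace 𝕂 F] {g : E → F} {S : Set E} {n : WithTop ℕ∞}

theorem IsOpen.isOpen_image_of_contDiffOn_of_hasFDerivAt_equiv (hS : IsOpen S)
    (hg : ContDiffOn 𝕂 n g S) (hn : n ≠ 0)
    (hg' : ∀ x ∈ S, ∃ e : E ≃L[𝕂] F, HasFDerivAt g (e : E →L[𝕂] F) x) : IsOpen (g '' S) := by
  rw [isOpen_iff_mem_nhds]
  rintro _ ⟨x, hx, rfl⟩
  obtain ⟨e, he⟩ := hg' x hx
  rw [← ((hg.contDiffAt (hS.mem_nhds hx)).hasStrictFDerivAt' he hn).map_nhds_eq_of_equiv]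
  exact image_mem_map (hS.mem_nhds hx)

/-- Near `g x`, `invFunOn g S` agrees with the local inverse from the inverse function theorem,
since both are right inverses of `g` with values in `S`, where `g` is injective. -/
theorem Set.InjOn.contDiffOn_invFunOn_image (hinj : InjOn g S) (hS : IsOpen S)
    (hg : ContDiffOn 𝕂 n g S) (hn : n ≠ 0)
    (hg' : ∀ x ∈ S, ∃ e : E ≃L[𝕂] F, HasFDerivAt g (e : E →L[𝕂] F) x) :
    ContDiffOn 𝕂 n (Function.invFunOn g S) (g '' S) := by
  rintro _ ⟨x, hx, rfl⟩
  obtain ⟨e, he⟩ := hg' x hx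
  have hgx : ContDiffAt 𝕂 n g x := hg.contDiffAt (hS.mem_nhds hx)
  set φ := hgx.localInverse he hn
  have hφ : ContDiffAt 𝕂 n φ (g x) := hgx.to_localInverse he hn
  have hφx : φ (g x) = x := hgx.localInverse_apply_image he hn
  have hright : ∀ᶠ z in 𝓝 (g x), g (φ z) = z :=
    (hgx.hasStrictFDerivAt' he hn).eventually_right_inverse
  have hmem : ∀ᶠ z in 𝓝 (g x), φ z ∈ S :=
    hφ.continuousAt.eventually_mem (hS.mem_nhds (by rwa [hφx]))
  have hinv_eq : Function.invFunOn g S =ᶠ[𝓝[g '' S] g x] φ := by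
    filter_upwards [nhdsWithin_le_nhds hright, nhdsWithin_le_nhds hmem, self_mem_nhdsWithin]
      with _ hz hφz hz_img
    obtain ⟨w, hw, rfl⟩ := hz_img
    rw [hinj.leftInvOn_invFunOn hw]
    exact hinj hw hφz hz.symm
  exact hφ.contDiffWithinAt.congr_of_eventuallyEq hinv_eq
    (by rw [hinj.leftInvOn_invFunOn hx, hφx])

end InverseOnImage

/-- Under bounded Hessian on an open convex set and `0 < α < 1/L`,
the gradient descent map `g x = x - α • ∇f x` is a C¹ diffeomorphism from `S`
onto its image `g '' S`: it is C¹ on `S`, injective on `S`, and admits a C¹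
inverse on `g '' S`. -/
theorem gradient_descent_diffeomorphism
    {N : ℕ} (S : Set (EuclideanSpace ℝ (Fin N))) (hS : IsOpen S) (hconv : Convex ℝ S)
    (f : EuclideanSpace ℝ (Fin N) → ℝ) (hf : ContDiffOn ℝ 2 f S)
    (L : ℝ) (hL : ∀ x ∈ S, ‖fderiv ℝ (gradient f) x‖ ≤ L)
    (α : ℝ) (hα : 0 < α) (hαL : α < 1 / L)
    (g : EuclideanSpace ℝ (Fin N) → EuclideanSpace ℝ (Fin N))
    (hg : ∀ x, g x = x - α • gradient f x) :
    ContDiffOn ℝ 1 g S ∧ Set.InjOn g S ∧ IsOpen (g '' S) ∧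
      ∃ h : EuclideanSpace ℝ (Fin N) → EuclideanSpace ℝ (Fin N),
        ContDiffOn ℝ 1 h (g '' S) ∧ ∀ x ∈ S, h (g x) = x := by
  have hαL' : α * L < 1 := (lt_div_iff₀ (one_div_pos.mp (hα.trans hαL))).mp hαL
  obtain rfl : g = fun x => x - α • gradient f x := funext hg
  have hgrad : ContDiffOn ℝ 1 (gradient f) S := hf.gradient_of_isOpen hS
  have hgrad_diff : ∀ x ∈ S, DifferentiableAt ℝ (gradient f) x := fun x hx =>
    (hgrad.differentiableOn one_ne_zero x hx).differentiableAt (hS.mem_nhds hx)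
  have hgC : ContDiffOn ℝ 1 (fun x => x - α • gradient f x) S :=
    contDiffOn_id.sub (hgrad.const_smul α)
  have hinj : InjOn (fun x => x - α • gradient f x) S := by
    refine injOn_id_sub_of_norm_sub_le hαL' fun x hx y hy => ?_
    rw [← smul_sub, norm_smul, Real.norm_of_nonneg hα.le, mul_assoc]
    exact mul_le_mul_of_nonneg_left
      (hconv.norm_image_sub_le_of_norm_fderiv_le hgrad_diff hL hy hx) hα.le
  have hg' : ∀ x ∈ S, ∃ e : EuclideanSpace ℝ (Fin N) ≃L[ℝ] EuclideanSpace ℝ (Fin N),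
      HasFDerivAt (fun x => x - α • gradient f x) (e : _ →L[ℝ] _) x := fun x hx =>
    ((hgrad_diff x hx).hasFDerivAt.const_smul α).exists_equiv_id_sub <| by
      rw [norm_smul, Real.norm_of_nonneg hα.le]
      exact (mul_le_mul_of_nonneg_left (hL x hx) hα.le).trans_lt hαL'
  exact ⟨hgC, hinj, hS.isOpen_image_of_contDiffOn_of_hasFDerivAt_equiv hgC one_ne_zero hg',
    Function.invFunOn _ S, hinj.contDiffOn_invFunOn_image hS hgC one_ne_zero hg',
    fun x hx => hinj.leftInvOn_invFunOn hx⟩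
end

section
/- Let f : ℝ^N → ℝ be twice continuously differentiable with sup_{x} ‖∇²f(x)‖₂ ≤ L < ∞, and let 0 < α < 1/L. Then the set of initial conditions x ∈ ℝ^N for which gradient descent x_{k+1} = x_k − α∇f(x_k) converges to a strict saddle point of f has Lebesgue measure zero, even when the critical points of f are not isolated. -/
/-!
Write `g y = y - α ∇f y`. Since `∇f` is `L`-Lipschitz and `αL < 1`, `g` is anti-Lipschitz, so
preimages under its iterates do not raise Hausdorff dimension. Near a strict saddle `p`, `g` is
`ε`-close to its linearisation `A = 1 - α ∇²f(p)`, which expands the span of the eigenvectors of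
`∇²f(p)` with negative eigenvalue by a factor `μ > 1` and does not expand the orthogonal
complement. For two orbits that stay near `p`, the difference of the orbits evolves by `A` up to a
relative error `ε`; once it enters the unstable cone it stays there and grows geometrically, which
is impossible for bounded orbits. So the points whose orbits stay near `p` form a Lipschitz graph
over the stable subspace, of dimension at most `N - 1`. Every initial condition converging to a
strict saddle lands in one of countably many such sets (Lindelöf) after finitely many steps, so
the whole set has Hausdorff dimension at most `N - 1`, hence Lebesgue measure zero.
-/

open MeasureTheory Filter Topology Set Module
open scoped NNReal ENNReal RealInnerProductSpace

theorem volume_eq_zero_of_dimH_lt_finrank {V : Type*} [NormedAddCommGroup V]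
    [InnerProductSpace ℝ V] [FiniteDimensional ℝ V] [MeasurableSpace V] [BorelSpace V] {s : Set V}
    (h : dimH s < finrank ℝ V) : volume s = 0 := by
  have hμH : μH[finrank ℝ V] s = 0 := by
    simpa using hausdorffMeasure_of_dimH_lt (d := finrank ℝ V) (by simpa using h)
  rw [← InnerProductSpace.euclideanHausdorffMeasure_eq_volume,
    Measure.euclideanHausdorffMeasure_def, Measure.smul_apply, hμH, smul_zero]

theorem dimH_le_finrank_of_le_mul_dist {X F : Type*} [MetricSpace X] [NormedAddCommGroup F]
    [NormedSpace ℝ F] (V : Submodule ℝ F) [FiniteDimensional ℝ V] {Q : X → F} {T : Set X}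
    {K : ℝ≥0} (hQ : MapsTo Q T V) (hK : ∀ x ∈ T, ∀ y ∈ T, dist x y ≤ K * dist (Q x) (Q y)) :
    dimH T ≤ finrank ℝ V := by
  have hanti : AntilipschitzWith K (T.domRestrict Q) :=
    AntilipschitzWith.of_le_mul_dist fun x y => hK x x.2 y y.2
  calc dimH T = dimH (univ : Set T) := by
        rw [← (isometry_subtype_coe (s := T)).dimH_image, image_univ, Subtype.range_coe]
    _ ≤ dimH (range (T.domRestrict Q)) := by rw [← image_univ]; exact hanti.le_dimH_image _
    _ ≤ dimH (V : Set F) := dimH_mono (range_subset_iff.2 fun x => hQ x.2)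
    _ = finrank ℝ V := by
        rw [← Real.dimH_univ_eq_finrank V, ← (isometry_subtype_coe (s := (V : Set F))).dimH_image,
          image_univ, Subtype.range_coe]

theorem AntilipschitzWith.iterate {α : Type*} [PseudoEMetricSpace α] {K : ℝ≥0} {f : α → α}
    (hf : AntilipschitzWith K f) : ∀ n, AntilipschitzWith (K ^ n) f^[n]
  | 0 => by simpa using AntilipschitzWith.id
  | n + 1 => by rw [pow_succ', Function.iterate_succ]; exact (hf.iterate n).comp hf

def stableSet {X : Type*} (g : X → X) (U : Set X) : Set X := {x | ∀ k, g^[k] x ∈ U}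

theorem exists_iterate_mem_stableSet {X : Type*} [TopologicalSpace X] {g : X → X} {x p : X}
    {U : Set X} (hU : U ∈ 𝓝 p) (h : Tendsto (fun k => g^[k] x) atTop (𝓝 p)) :
    ∃ K, g^[K] x ∈ stableSet g U := by
  obtain ⟨K, hK⟩ := eventually_atTop.1 (h hU)
  exact ⟨K, fun k => by rw [← Function.iterate_add_apply]; exact hK _ (Nat.le_add_left K k)⟩

theorem dimH_setOf_tendsto_le {X : Type*} [MetricSpace X] [SecondCountableTopology X]
    {g : X → X} {K : ℝ≥0} (hg : AntilipschitzWith K g) {S : Set X} {d : ℝ≥0∞}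
    (hS : ∀ p ∈ S, ∃ U ∈ 𝓝 p, dimH (stableSet g U) ≤ d) :
    dimH {x | ∃ p ∈ S, Tendsto (fun k => g^[k] x) atTop (𝓝 p)} ≤ d := by
  choose! U hU hdim using hS
  obtain ⟨C, hCS, hC, hcover⟩ :=
    TopologicalSpace.isOpen_biUnion_countable S (fun p => interior (U p)) fun _ _ => isOpen_interior
  have hsub : {x | ∃ p ∈ S, Tendsto (fun k => g^[k] x) atTop (𝓝 p)} ⊆
      ⋃ q ∈ C, ⋃ K : ℕ, g^[K] ⁻¹' stableSet g (U q) := by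
    rintro x ⟨p, hpS, hx⟩
    have hp : p ∈ ⋃ q ∈ C, interior (U q) :=
      hcover ▸ mem_biUnion hpS (mem_interior_iff_mem_nhds.2 (hU p hpS))
    obtain ⟨q, hqC, hpq⟩ := mem_iUnion₂.1 hp
    exact mem_biUnion hqC (mem_iUnion.2 (exists_iterate_mem_stableSet
      (mem_of_superset (isOpen_interior.mem_nhds hpq) interior_subset) hx))
  refine (dimH_mono hsub).trans ?_
  rw [dimH_bUnion hC]
  refine iSup₂_le fun q hq => ?_
  rw [dimH_iUnion]
  exact iSup_le fun n => ((hg.iterate n).dimH_preimage_le _).trans (hdim q (hCS hq))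

namespace OrthonormalBasis

variable {ι E : Type*} [Fintype ι] [NormedAddCommGroup E] [InnerProductSpace ℝ E]
  (b : OrthonormalBasis ι ℝ E) (s : Finset ι)

noncomputable def proj : E →ₗ[ℝ] E :=
  ∑ i ∈ s, (b.toBasis.coord i).smulRight (b i)

theorem proj_apply (w : E) : b.proj s w = ∑ i ∈ s, b.repr w i • b i := by
  simp [proj]

theorem norm_proj_sq (w : E) : ‖b.proj s w‖ ^ 2 = ∑ i ∈ s, b.repr w i ^ 2 := by
  classical
  have hrepr (j : ι) : b.repr (b.proj s w) j = if j ∈ s then b.repr w j else 0 := by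
    simp [proj_apply, OrthonormalBasis.repr_self, Pi.single_apply]
  rw [← b.sum_sq_inner_right]
  simp_rw [← b.repr_apply_apply, hrepr]
  simp [ite_pow, Finset.sum_ite_mem]

theorem norm_proj_le (w : E) : ‖b.proj s w‖ ≤ ‖w‖ := by
  refine pow_le_pow_iff_left₀ (norm_nonneg _) (norm_nonneg _) two_ne_zero |>.1 ?_
  rw [norm_proj_sq, ← b.sum_sq_inner_right]
  simp_rw [← b.repr_apply_apply]
  exact Finset.sum_le_sum_of_subset_of_nonneg s.subset_univ fun i _ _ => sq_nonneg _

theorem proj_add_proj_compl [DecidableEq ι] (w : E) : b.proj s w + b.proj sᶜ w = w := by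
  rw [proj_apply, proj_apply, Finset.sum_add_sum_compl, b.sum_repr]

theorem finrank_range_proj_le : finrank ℝ (LinearMap.range (b.proj s)) ≤ s.card := by
  classical
  calc finrank ℝ (LinearMap.range (b.proj s))
      ≤ finrank ℝ (Submodule.span ℝ (s.image b : Set E)) := by
        refine Submodule.finrank_mono ?_
        rintro _ ⟨w, rfl⟩
        rw [proj_apply]
        exact Submodule.sum_mem _ fun i hi =>
          Submodule.smul_mem _ _ (Submodule.subset_span (by simpa using ⟨i, hi, rfl⟩))
    _ ≤ (s.image b).card := finrank_span_finset_le_card _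
    _ ≤ s.card := Finset.card_image_le

variable {T : E →ₗ[ℝ] E} {a : ι → ℝ} {c : ℝ}

theorem mul_norm_proj_le_norm_proj_map (hT : ∀ w i, b.repr (T w) i = a i * b.repr w i)
    (hc : 0 ≤ c) (ha : ∀ i ∈ s, c ≤ |a i|) (w : E) :
    c * ‖b.proj s w‖ ≤ ‖b.proj s (T w)‖ := by
  refine pow_le_pow_iff_left₀ (by positivity) (norm_nonneg _) two_ne_zero |>.1 ?_
  rw [mul_pow, norm_proj_sq, norm_proj_sq, Finset.mul_sum]
  refine Finset.sum_le_sum fun i hi => ?_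
  rw [hT, mul_pow, ← sq_abs (a i)]
  gcongr
  exact ha i hi

theorem norm_proj_map_le (hT : ∀ w i, b.repr (T w) i = a i * b.repr w i)
    (ha : ∀ i ∈ s, |a i| ≤ 1) (w : E) :
    ‖b.proj s (T w)‖ ≤ ‖b.proj s w‖ := by
  refine pow_le_pow_iff_left₀ (norm_nonneg _) (norm_nonneg _) two_ne_zero |>.1 ?_
  rw [norm_proj_sq, norm_proj_sq]
  refine Finset.sum_le_sum fun i hi => ?_
  rw [hT, mul_pow, ← sq_abs (a i)]
  have : |a i| ^ 2 ≤ 1 := pow_le_one₀ (abs_nonneg _) (ha i hi)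
  nlinarith [sq_nonneg (b.repr w i)]

end OrthonormalBasis

structure ExpandingSplitting {E : Type*} [NormedAddCommGroup E] [NormedSpace ℝ E]
    (A : E →L[ℝ] E) (μ : ℝ) where
  unstable : E →ₗ[ℝ] E
  stable : E →ₗ[ℝ] E
  unstable_add_stable (w : E) : unstable w + stable w = w
  norm_unstable_le (w : E) : ‖unstable w‖ ≤ ‖w‖
  norm_stable_le (w : E) : ‖stable w‖ ≤ ‖w‖
  mul_norm_unstable_le (w : E) : μ * ‖unstable w‖ ≤ ‖unstable (A w)‖
  norm_stable_map_le (w : E) : ‖stable (A w)‖ ≤ ‖stable w‖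

namespace ExpandingSplitting

variable {E : Type*} [NormedAddCommGroup E] [NormedSpace ℝ E] {A : E →L[ℝ] E} {μ : ℝ}
  (S : ExpandingSplitting A μ)

theorem norm_le_norm_unstable_add_norm_stable (w : E) :
    ‖w‖ ≤ ‖S.unstable w‖ + ‖S.stable w‖ := by
  conv_lhs => rw [← S.unstable_add_stable w]
  exact norm_add_le _ _

theorem cone_step {ε : ℝ} (hε : 0 ≤ ε) (hμ : 1 + 4 * ε ≤ μ) {w w' : E}
    (hw : ‖S.stable w‖ < ‖S.unstable w‖) (hw' : ‖w' - A w‖ ≤ ε * ‖w‖) :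
    ‖S.stable w'‖ < ‖S.unstable w'‖ ∧ (1 + 2 * ε) * ‖S.unstable w‖ ≤ ‖S.unstable w'‖ := by
  -- inside the cone, `‖w‖ ≤ 2 * ‖S.unstable w‖`
  have herr : ‖w' - A w‖ ≤ 2 * ε * ‖S.unstable w‖ := by
    nlinarith [S.norm_le_norm_unstable_add_norm_stable w]
  have hu : ‖S.unstable (A w)‖ ≤ ‖S.unstable w'‖ + ‖w' - A w‖ := by
    rw [← sub_sub_cancel (S.unstable w') (S.unstable (A w)), ← map_sub]
    exact (norm_sub_le _ _).trans (add_le_add_right (S.norm_unstable_le _) _)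
  have hs : ‖S.stable w'‖ ≤ ‖S.stable (A w)‖ + ‖w' - A w‖ := by
    rw [← add_sub_cancel (S.stable (A w)) (S.stable w'), ← map_sub]
    exact (norm_add_le _ _).trans (add_le_add_right (S.norm_stable_le _) _)
  have hexp := S.mul_norm_unstable_le w
  have hcon := S.norm_stable_map_le w
  constructor <;> nlinarith [norm_nonneg (S.unstable w)]

theorem norm_unstable_le_norm_stable_of_bounded {ε : ℝ} (hε : 0 < ε) (hμ : 1 + 4 * ε ≤ μ)
    {w : ℕ → E} (hw : ∀ k, ‖w (k + 1) - A (w k)‖ ≤ ε * ‖w k‖) {C : ℝ} (hC : ∀ k, ‖w k‖ ≤ C) :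
    ‖S.unstable (w 0)‖ ≤ ‖S.stable (w 0)‖ := by
  by_contra! h0
  have hgrowth : ∀ k, ‖S.stable (w k)‖ < ‖S.unstable (w k)‖ ∧
      (1 + 2 * ε) ^ k * ‖S.unstable (w 0)‖ ≤ ‖S.unstable (w k)‖ := by
    intro k
    induction k with
    | zero => simpa using h0
    | succ k ih =>
      obtain ⟨hcone, hexp⟩ := S.cone_step hε.le hμ ih.1 (hw k)
      exact ⟨hcone, by rw [pow_succ', mul_assoc]; nlinarith⟩
  have hpos : 0 < ‖S.unstable (w 0)‖ := (norm_nonneg _).trans_lt h0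
  obtain ⟨k, hk⟩ := pow_unbounded_of_one_lt (C / ‖S.unstable (w 0)‖) (by linarith : 1 < 1 + 2 * ε)
  rw [div_lt_iff₀ hpos] at hk
  linarith [(hgrowth k).2, S.norm_unstable_le (w k), hC k]

variable {ε : ℝ≥0} {g : E → E} {U : Set E}

theorem norm_unstable_sub_le_norm_stable_sub (hε : 0 < ε) (hμ : 1 + 4 * (ε : ℝ) ≤ μ)
    (hU : Bornology.IsBounded U) (hg : ApproximatesLinearOn g A U ε) {x y : E}
    (hx : x ∈ stableSet g U) (hy : y ∈ stableSet g U) :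
    ‖S.unstable (x - y)‖ ≤ ‖S.stable (x - y)‖ := by
  obtain ⟨C, hC⟩ := Metric.isBounded_iff.1 hU
  refine S.norm_unstable_le_norm_stable_of_bounded (w := fun k => g^[k] x - g^[k] y) hε hμ
    (fun k => ?_) (fun k => (dist_eq_norm _ _).symm.trans_le (hC (hx k) (hy k)))
  simp only [Function.iterate_succ_apply']
  exact hg _ (hx k) _ (hy k)

theorem dimH_stableSet_le [FiniteDimensional ℝ E] (hε : 0 < ε) (hμ : 1 + 4 * (ε : ℝ) ≤ μ)
    (hU : Bornology.IsBounded U) (hg : ApproximatesLinearOn g A U ε) :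
    dimH (stableSet g U) ≤ finrank ℝ (LinearMap.range S.stable) := by
  refine dimH_le_finrank_of_le_mul_dist (K := 2) _ (fun x _ => LinearMap.mem_range_self _ x)
    fun x hx y hy => ?_
  have h := S.norm_unstable_sub_le_norm_stable_sub hε hμ hU hg hx hy
  rw [dist_eq_norm, dist_eq_norm, ← map_sub, NNReal.coe_ofNat]
  linarith [S.norm_le_norm_unstable_add_norm_stable (x - y)]

end ExpandingSplitting

section Spectral

variable {E : Type*} [NormedAddCommGroup E] [InnerProductSpace ℝ E] [FiniteDimensional ℝ E]

theorem LinearMap.IsSymmetric.eigenvalues_le_opNorm {H : E →L[ℝ] E}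
    (hH : (H : E →ₗ[ℝ] E).IsSymmetric) {n : ℕ} (hn : finrank ℝ E = n) (i : Fin n) :
    hH.eigenvalues hn i ≤ ‖H‖ := by
  set b := hH.eigenvectorBasis hn
  have hbi : H (b i) = hH.eigenvalues hn i • b i := hH.apply_eigenvectorBasis hn i
  calc hH.eigenvalues hn i = ⟪H (b i), b i⟫ := by simp [hbi, real_inner_smul_left]
    _ ≤ ‖H (b i)‖ * ‖b i‖ := real_inner_le_norm _ _
    _ ≤ ‖H‖ := by simpa using H.le_opNorm (b i)

theorem LinearMap.IsSymmetric.exists_eigenvalues_neg {T : E →ₗ[ℝ] E}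
    (hT : T.IsSymmetric) {n : ℕ} (hn : finrank ℝ E = n) {v : E} (hv : ⟪T v, v⟫ < 0) :
    ∃ i, hT.eigenvalues hn i < 0 := by
  by_contra! hnonneg
  set b := hT.eigenvectorBasis hn
  refine hv.not_ge ?_
  rw [← b.sum_inner_mul_inner]
  refine Finset.sum_nonneg fun i _ => ?_
  rw [real_inner_comm, ← b.repr_apply_apply, ← b.repr_apply_apply,
    hT.eigenvectorBasis_apply_self_apply, mul_assoc]
  exact mul_nonneg (hnonneg i) (mul_self_nonneg _)

theorem exists_expandingSplitting_id_sub_smul {H : E →L[ℝ] E}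
    (hH : (H : E →ₗ[ℝ] E).IsSymmetric) {α : ℝ} (hα : 0 < α) (hαH : α * ‖H‖ ≤ 2) {v : E}
    (hv : ⟪H v, v⟫ < 0) :
    ∃ μ > 1, ∃ S : ExpandingSplitting (ContinuousLinearMap.id ℝ E - α • H) μ,
      finrank ℝ (LinearMap.range S.stable) < finrank ℝ E := by
  classical
  set b := hH.eigenvectorBasis rfl
  set ev := hH.eigenvalues rfl
  have hH_repr (w : E) (i) : b.repr (H w) i = ev i * b.repr w i :=
    hH.eigenvectorBasis_apply_self_apply rfl w i
  have hA_repr (w : E) (i) :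
      b.repr ((ContinuousLinearMap.id ℝ E - α • H) w) i = (1 - α * ev i) * b.repr w i := by
    simp [hH_repr]
    ring
  set Iu := Finset.univ.filter fun i => ev i < 0
  have hIu : Iu.Nonempty :=
    let ⟨i, hi⟩ := hH.exists_eigenvalues_neg rfl hv
    ⟨i, by simpa [Iu] using hi⟩
  set μ := Iu.inf' hIu fun i => 1 - α * ev i
  have hμ : 1 < μ := (Finset.lt_inf'_iff _).2 fun i hi => by
    have : ev i < 0 := by simpa [Iu] using hi
    nlinarith
  refine ⟨μ, hμ, ⟨b.proj Iu, b.proj Iuᶜ, b.proj_add_proj_compl Iu, b.norm_proj_le Iu,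
    b.norm_proj_le Iuᶜ, b.mul_norm_proj_le_norm_proj_map Iu hA_repr (by linarith)
      fun i hi => (Finset.inf'_le _ hi).trans (le_abs_self _),
    b.norm_proj_map_le Iuᶜ hA_repr fun i hi => ?_⟩, ?_⟩
  · have h0 : 0 ≤ ev i := by simpa [Iu] using hi
    have h1 : α * ev i ≤ 2 :=
      (mul_le_mul_of_nonneg_left (hH.eigenvalues_le_opNorm rfl i) hα.le).trans hαH
    rw [abs_le]
    constructor <;> nlinarith
  · calc finrank ℝ (LinearMap.range (b.proj Iuᶜ)) ≤ Iuᶜ.card := b.finrank_range_proj_le _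
      _ < Fintype.card (Fin (finrank ℝ E)) := (Finset.card_compl_lt_iff_nonempty _).2 hIu
      _ = finrank ℝ E := Fintype.card_fin _

end Spectral

section Gradient

variable {E : Type*} [NormedAddCommGroup E] [InnerProductSpace ℝ E] [CompleteSpace E]

noncomputable def gradientStep (f : E → ℝ) (α : ℝ) (y : E) : E := y - α • gradient f y

variable {f : E → ℝ}

theorem ContDiff.gradient {m n : WithTop ℕ∞} (hf : ContDiff ℝ n f) (hmn : m + 1 ≤ n) :
    ContDiff ℝ m (gradient f) :=
  (InnerProductSpace.toDual ℝ E).symm.contDiff.comp (hf.fderiv_right hmn)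

theorem inner_fderiv_gradient_apply (x u v : E) :
    ⟪fderiv ℝ (gradient f) x u, v⟫ = fderiv ℝ (fderiv ℝ f) x u v := by
  have : gradient f = (InnerProductSpace.toDual ℝ E).symm ∘ fderiv ℝ f := rfl
  rw [this, LinearIsometryEquiv.comp_fderiv]
  exact InnerProductSpace.toDual_symm_apply

theorem isSymmetric_fderiv_gradient {x : E} (hf : ContDiffAt ℝ 2 f x) :
    (fderiv ℝ (gradient f) x : E →ₗ[ℝ] E).IsSymmetric := fun u v => by
  rw [ContinuousLinearMap.coe_coe, real_inner_comm _ u, inner_fderiv_gradient_apply,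
    inner_fderiv_gradient_apply]
  exact hf.isSymmSndFDerivAt (by simp) u v

theorem hasStrictFDerivAt_gradientStep (hf : ContDiff ℝ 2 f) (α : ℝ) (x : E) :
    HasStrictFDerivAt (gradientStep f α)
      (ContinuousLinearMap.id ℝ E - α • fderiv ℝ (gradient f) x) x :=
  (hasStrictFDerivAt_id x).sub
    (((hf.gradient (m := 1) le_rfl).contDiffAt.hasStrictFDerivAt one_ne_zero).const_smul α)

theorem antilipschitzWith_gradientStep (hf : ContDiff ℝ 2 f) {L : ℝ}
    (hL : ∀ x, ‖fderiv ℝ (gradient f) x‖ ≤ L) {α : ℝ} (hα : 0 ≤ α) (hαL : α * L < 1) :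
    AntilipschitzWith (1 - α * L).toNNReal⁻¹ (gradientStep f α) := by
  lift L to ℝ≥0 using (norm_nonneg _).trans (hL 0)
  lift α to ℝ≥0 using hα
  have hgrad : LipschitzWith L (gradient f) :=
    lipschitzWith_of_nnnorm_fderiv_le ((hf.gradient (m := 1) le_rfl).differentiable one_ne_zero)
      fun x => hL x
  have hαL' : α * L < 1 := by exact_mod_cast hαL
  have hK : (1 - (α : ℝ) * L).toNNReal = 1⁻¹ - ‖-(α : ℝ)‖₊ * L := by
    ext
    simp [NNReal.coe_sub hαL'.le, hαL.le]
  have hstep : gradientStep f α = fun y => id y + ((-(α : ℝ) • ·) ∘ gradient f) y := by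
    funext y
    simp [gradientStep, sub_eq_add_neg]
  rw [hK, hstep]
  exact AntilipschitzWith.id.add_lipschitzWith ((lipschitzWith_smul _).comp hgrad)
    (by simpa using hαL')

end Gradient

theorem exists_mem_nhds_dimH_stableSet_gradientStep_le {E : Type*} [NormedAddCommGroup E]
    [InnerProductSpace ℝ E] [FiniteDimensional ℝ E] {f : E → ℝ} (hf : ContDiff ℝ 2 f) {α : ℝ}
    (hα : 0 < α) {p : E} (hαH : α * ‖fderiv ℝ (gradient f) p‖ ≤ 2) {v : E}
    (hv : ⟪fderiv ℝ (gradient f) p v, v⟫ < 0) :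
    ∃ U ∈ 𝓝 p, dimH (stableSet (gradientStep f α) U) ≤ (finrank ℝ E - 1 : ℕ) := by
  obtain ⟨μ, hμ, S, hS⟩ :=
    exists_expandingSplitting_id_sub_smul (isSymmetric_fderiv_gradient hf.contDiffAt) hα hαH hv
  set ε : ℝ≥0 := ⟨(μ - 1) / 4, by linarith⟩
  have hε_def : (ε : ℝ) = (μ - 1) / 4 := rfl
  have hε : 0 < ε := NNReal.coe_pos.1 (by rw [hε_def]; linarith)
  obtain ⟨s, hs, happrox⟩ :=
    (hasStrictFDerivAt_gradientStep hf α p).approximates_deriv_on_nhds (c := ε) (Or.inr hε)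
  refine ⟨s ∩ Metric.ball p 1, inter_mem hs (Metric.ball_mem_nhds p one_pos), ?_⟩
  calc dimH (stableSet (gradientStep f α) (s ∩ Metric.ball p 1))
      ≤ finrank ℝ (LinearMap.range S.stable) :=
        S.dimH_stableSet_le hε (by rw [hε_def]; linarith)
          (Metric.isBounded_ball.subset inter_subset_right) (happrox.mono_set inter_subset_left)
    _ ≤ (finrank ℝ E - 1 : ℕ) := by exact_mod_cast Nat.le_sub_one_of_lt hS

/-- Main theorem, non-isolated critical points: for `f : ℝ^N → ℝ`
twice continuously differentiable with globally bounded Hessian `‖∇²f(x)‖ ≤ L`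
and step size `0 < α < 1/L`, the set of initial conditions from which gradient
descent converges to a strict saddle point (a critical point where the Hessian
has a strictly negative eigenvalue, equivalently the associated quadratic form
takes a negative value) has Lebesgue measure zero. No isolatedness of critical
points is assumed. -/
theorem gradient_descent_avoids_strict_saddles
    {N : ℕ} (f : EuclideanSpace ℝ (Fin N) → ℝ) (hf : ContDiff ℝ 2 f)
    (L : ℝ) (hL : ∀ x, ‖fderiv ℝ (gradient f) x‖ ≤ L)
    (α : ℝ) (hα : 0 < α) (hαL : α < 1 / L) :
    volume {x : EuclideanSpace ℝ (Fin N) |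
      ∃ p, (gradient f p = 0 ∧
            ∃ v : EuclideanSpace ℝ (Fin N),
              (inner ℝ (fderiv ℝ (gradient f) p v) v : ℝ) < 0) ∧
        Tendsto (fun k => (fun y => y - α • gradient f y)^[k] x) atTop (𝓝 p)} = 0 := by
  have hL0 : 0 < L := one_div_pos.1 (hα.trans hαL)
  have hαL' : α * L < 1 := (lt_div_iff₀ hL0).1 hαL
  obtain rfl | hN := N.eq_zero_or_pos
  · simp [Subsingleton.elim _ (0 : EuclideanSpace ℝ (Fin 0))]
  have hdim := dimH_setOf_tendsto_le (antilipschitzWith_gradientStep hf hL hα.le hαL')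
    (S := {p | gradient f p = 0 ∧ ∃ v, ⟪fderiv ℝ (gradient f) p v, v⟫ < 0})
    fun p ⟨_, _, hv⟩ => exists_mem_nhds_dimH_stableSet_gradientStep_le hf hα
      (by nlinarith [hL p]) hv
  refine volume_eq_zero_of_dimH_lt_finrank (hdim.trans_lt ?_)
  rw [finrank_euclideanSpace_fin]
  exact_mod_cast Nat.sub_lt hN one_pos
end
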